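/- Let l₁, l₂ > 0. Then the number of pairs of nonnegative integers (m, n) with m²π²/l₁² + n²π²/l₂² ≤ λ, divided by λ, tends to l₁l₂/(4π) as λ → ∞. (This is Weyl's law for the Neumann eigenvalues of a rectangle with side lengths l₁ and l₂.) -/

import Mathlib

/-!
Rescaling by `√Λ / π` turns the count into the number of lattice points `(m, n) ∈ ℕ²` in the
quarter ellipse with semi-axes `a = √Λ l₁ / π`, `b = √Λ l₂ / π`. Counted column by column, the
column over `m ≤ a` holds `⌊f m⌋ + 1` points, where `f x = b √(1 - (x / a)²)` is antitone with
`∫₀ᵃ f = π a b / 4 = Λ l₁ l₂ / (4π)`. Comparing the column sums with this integral gives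
`π a b / 4 ≤ N ≤ π a b / 4 + a + b + 1`, and the error is `O(√Λ)`.
-/

open Real Filter Finset intervalIntegral

theorem card_pairs_fst_le_snd_le (M : ℕ) (K : ℕ → ℕ) :
    Nat.card {p : ℕ × ℕ // p.1 ≤ M ∧ p.2 ≤ K p.1} = ∑ m ∈ range (M + 1), (K m + 1) := by
  have hS : {p : ℕ × ℕ | p.1 ≤ M ∧ p.2 ≤ K p.1} =
      ((range (M + 1)).sigma fun m => range (K m + 1)).map
        (Equiv.sigmaEquivProd ℕ ℕ).toEmbedding := by
    ext ⟨m, n⟩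
    simp
  rw [← Set.coe_ofPred, hS, Nat.card_coe_set_eq, Set.ncard_coe_finset, card_map, card_sigma]
  simp

theorem integral_sqrt_one_sub_sq_zero_one : ∫ x in (0 : ℝ)..1, √(1 - x ^ 2) = π / 4 := by
  have hcont : Continuous fun x : ℝ => √(1 - x ^ 2) := by fun_prop
  have heven : ∫ x in (-1 : ℝ)..0, √(1 - x ^ 2) = ∫ x in (0 : ℝ)..1, √(1 - x ^ 2) := by
    have := integral_comp_neg (a := (0 : ℝ)) (b := 1) fun x => √(1 - x ^ 2)
    simp only [neg_sq, neg_zero] at this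
    exact this.symm
  have := integral_sqrt_one_sub_sq
  rw [← integral_add_adjacent_intervals (hcont.intervalIntegrable (-1) 0)
    (hcont.intervalIntegrable 0 1), heven] at this
  linarith

theorem integral_quarter_ellipse {a : ℝ} (ha : 0 < a) (b : ℝ) :
    ∫ x in (0 : ℝ)..a, b * √(1 - (x / a) ^ 2) = π * a * b / 4 := by
  rw [integral_comp_div (fun u => b * √(1 - u ^ 2)) ha.ne', integral_const_mul, zero_div,
    div_self ha.ne', integral_sqrt_one_sub_sq_zero_one, smul_eq_mul]
  ring

theorem antitoneOn_quarter_ellipse (a : ℝ) {b : ℝ} (hb : 0 ≤ b) :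
    AntitoneOn (fun x => b * √(1 - (x / a) ^ 2)) (Set.Ici 0) := by
  intro x hx y _ hxy
  have : (x / a) ^ 2 ≤ (y / a) ^ 2 := by
    rw [div_pow, div_pow]; gcongr
  dsimp only
  gcongr

theorem div_sq_add_div_sq_le_one_iff {a b : ℝ} (ha : 0 < a) (hb : 0 < b) (m n : ℕ) :
    ((m : ℝ) / a) ^ 2 + ((n : ℝ) / b) ^ 2 ≤ 1 ↔
      m ≤ ⌊a⌋₊ ∧ n ≤ ⌊b * √(1 - ((m : ℝ) / a) ^ 2)⌋₊ := by
  have hm : (m : ℝ) ≤ a ↔ ((m : ℝ) / a) ^ 2 ≤ 1 := by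
    rw [sq_le_one_iff₀ (by positivity), div_le_one ha]
  have hn (y : ℝ) (hy : 0 ≤ y) : ((n : ℝ) / b) ^ 2 ≤ y ↔ (n : ℝ) ≤ b * √y := by
    rw [← div_le_iff₀' hb, Real.le_sqrt (by positivity) hy]
  rw [Nat.le_floor_iff ha.le, Nat.le_floor_iff (by positivity), hm]
  constructor
  · intro h
    have : ((m : ℝ) / a) ^ 2 ≤ 1 := by linarith [sq_nonneg ((n : ℝ) / b)]
    exact ⟨this, (hn _ (by linarith)).1 (by linarith)⟩
  · rintro ⟨hma, hnb⟩
    linarith [(hn _ (by linarith)).2 hnb]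

theorem card_quarter_ellipse_eq_sum {a b : ℝ} (ha : 0 < a) (hb : 0 < b) :
    Nat.card {p : ℕ × ℕ // ((p.1 : ℝ) / a) ^ 2 + ((p.2 : ℝ) / b) ^ 2 ≤ 1} =
      ∑ m ∈ range (⌊a⌋₊ + 1), (⌊b * √(1 - ((m : ℝ) / a) ^ 2)⌋₊ + 1) := by
  simp_rw [div_sq_add_div_sq_le_one_iff ha hb]
  exact card_pairs_fst_le_snd_le _ fun m => ⌊b * √(1 - ((m : ℝ) / a) ^ 2)⌋₊

theorem pi_mul_div_four_le_card_quarter_ellipse {a b : ℝ} (ha : 0 < a) (hb : 0 < b) :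
    π * a * b / 4 ≤
      Nat.card {p : ℕ × ℕ // ((p.1 : ℝ) / a) ^ 2 + ((p.2 : ℝ) / b) ^ 2 ≤ 1} := by
  set f : ℝ → ℝ := fun x => b * √(1 - (x / a) ^ 2)
  have hf : Continuous f := by fun_prop
  have hM : a ≤ ((⌊a⌋₊ + 1 : ℕ) : ℝ) := by
    push_cast
    exact (Nat.lt_floor_add_one a).le
  have hsum := ((antitoneOn_quarter_ellipse a hb.le).mono fun x hx => by
    simpa using hx.1).integral_le_sum_Ico (Nat.zero_le (⌊a⌋₊ + 1))
  rw [Nat.cast_zero, ← range_eq_Ico] at hsum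
  rw [card_quarter_ellipse_eq_sum ha hb, Nat.cast_sum, ← integral_quarter_ellipse ha b]
  calc ∫ x in (0 : ℝ)..a, f x ≤ ∫ x in (0 : ℝ)..((⌊a⌋₊ + 1 : ℕ) : ℝ), f x :=
        integral_mono_interval le_rfl ha.le hM (Eventually.of_forall fun x => by positivity)
          (hf.intervalIntegrable _ _)
    _ ≤ ∑ m ∈ range (⌊a⌋₊ + 1), f m := hsum
    _ ≤ _ := sum_le_sum fun m _ => by
        push_cast
        exact (Nat.lt_floor_add_one _).le

theorem card_quarter_ellipse_le {a b : ℝ} (ha : 0 < a) (hb : 0 < b) :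
    Nat.card {p : ℕ × ℕ // ((p.1 : ℝ) / a) ^ 2 + ((p.2 : ℝ) / b) ^ 2 ≤ 1} ≤
      π * a * b / 4 + a + b + 1 := by
  set f : ℝ → ℝ := fun x => b * √(1 - (x / a) ^ 2)
  have hf : Continuous f := by fun_prop
  have hM : (⌊a⌋₊ : ℝ) ≤ a := Nat.floor_le ha.le
  have hsum := ((antitoneOn_quarter_ellipse a hb.le).mono fun x hx => by
    simpa using hx.1).sum_le_integral_Ico (Nat.zero_le ⌊a⌋₊)
  rw [Nat.cast_zero, ← range_eq_Ico] at hsum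
  have hint : ∫ x in (0 : ℝ)..⌊a⌋₊, f x ≤ ∫ x in (0 : ℝ)..a, f x :=
    integral_mono_interval le_rfl (Nat.cast_nonneg _) hM
      (Eventually.of_forall fun x => by positivity) (hf.intervalIntegrable _ _)
  rw [card_quarter_ellipse_eq_sum ha hb, ← integral_quarter_ellipse ha b]
  push_cast
  calc ∑ m ∈ range (⌊a⌋₊ + 1), ((⌊f m⌋₊ : ℝ) + 1)
      ≤ ∑ m ∈ range (⌊a⌋₊ + 1), (f m + 1) :=
        sum_le_sum fun m _ => by gcongr; exact Nat.floor_le (by positivity)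
    _ = ∑ m ∈ range ⌊a⌋₊, f ↑(m + 1) + b + (⌊a⌋₊ + 1) := by
        simp [sum_add_distrib, sum_range_succ', f]
    _ ≤ _ := by linarith

noncomputable def rectangleNeumannCount (l₁ l₂ Λ : ℝ) : ℕ :=
  Nat.card {p : ℕ × ℕ //
    (p.1 : ℝ) ^ 2 * π ^ 2 / l₁ ^ 2 + (p.2 : ℝ) ^ 2 * π ^ 2 / l₂ ^ 2 ≤ Λ}

theorem rectangleNeumannCount_eq_card_quarter_ellipse {l₁ l₂ Λ : ℝ} (h₁ : 0 < l₁)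
    (h₂ : 0 < l₂) (hΛ : 0 < Λ) :
    rectangleNeumannCount l₁ l₂ Λ = Nat.card {p : ℕ × ℕ //
      ((p.1 : ℝ) / (√Λ * l₁ / π)) ^ 2 + ((p.2 : ℝ) / (√Λ * l₂ / π)) ^ 2 ≤ 1} := by
  have hscale (x y : ℝ) : (x / (√Λ * l₁ / π)) ^ 2 + (y / (√Λ * l₂ / π)) ^ 2 =
      (x ^ 2 * π ^ 2 / l₁ ^ 2 + y ^ 2 * π ^ 2 / l₂ ^ 2) / Λ := by
    field_simp
    rw [sq_sqrt hΛ.le]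
    ring
  simp_rw [hscale, div_le_one hΛ]
  rfl

theorem rectangleNeumannCount_bounds {l₁ l₂ Λ : ℝ} (h₁ : 0 < l₁) (h₂ : 0 < l₂) (hΛ : 0 < Λ) :
    Λ * (l₁ * l₂ / (4 * π)) ≤ rectangleNeumannCount l₁ l₂ Λ ∧
      (rectangleNeumannCount l₁ l₂ Λ : ℝ) ≤
        Λ * (l₁ * l₂ / (4 * π)) + √Λ * ((l₁ + l₂) / π) + 1 := by
  have ha : 0 < √Λ * l₁ / π := by positivity
  have hb : 0 < √Λ * l₂ / π := by positivity
  have harea : π * (√Λ * l₁ / π) * (√Λ * l₂ / π) / 4 = Λ * (l₁ * l₂ / (4 * π)) := by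
    field_simp
    rw [sq_sqrt hΛ.le]
  rw [rectangleNeumannCount_eq_card_quarter_ellipse h₁ h₂ hΛ, ← harea]
  refine ⟨pi_mul_div_four_le_card_quarter_ellipse ha hb, ?_⟩
  convert card_quarter_ellipse_le ha hb using 1
  ring

/-- Weyl's law for the Neumann eigenvalues of a rectangle with side lengths `l₁`, `l₂`:
the number of pairs of nonnegative integers `(m, n)` with
`m²π²/l₁² + n²π²/l₂² ≤ Λ`, divided by `Λ`, tends to `l₁l₂/(4π)` as `Λ → ∞`. -/
theorem weyl_law_rectangle_neumann (l₁ l₂ : ℝ) (h₁ : 0 < l₁) (h₂ : 0 < l₂) :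
    Filter.Tendsto
      (fun Λ : ℝ =>
        (Nat.card {p : ℕ × ℕ //
          (p.1 : ℝ) ^ 2 * Real.pi ^ 2 / l₁ ^ 2 + (p.2 : ℝ) ^ 2 * Real.pi ^ 2 / l₂ ^ 2 ≤ Λ} : ℝ)
          / Λ)
      Filter.atTop (nhds (l₁ * l₂ / (4 * Real.pi))) := by
  set L := l₁ * l₂ / (4 * π)
  set c := (l₁ + l₂) / π
  have hupper : Tendsto (fun Λ : ℝ => L + c * (√Λ)⁻¹ + Λ⁻¹) atTop (nhds L) := by
    have hsqrt := (tendsto_inv_atTop_zero.comp tendsto_sqrt_atTop).const_mul c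
    simpa using (tendsto_const_nhds.add hsqrt).add tendsto_inv_atTop_zero
  refine tendsto_of_tendsto_of_tendsto_of_le_of_le' tendsto_const_nhds hupper ?_ ?_ <;>
    filter_upwards [eventually_gt_atTop 0] with Λ hΛ
  · rw [le_div_iff₀ hΛ, mul_comm]
    exact (rectangleNeumannCount_bounds h₁ h₂ hΛ).1
  · calc _ ≤ (Λ * L + √Λ * c + 1) / Λ := by
          gcongr
          exact (rectangleNeumannCount_bounds h₁ h₂ hΛ).2
      _ = L + c * (√Λ)⁻¹ + Λ⁻¹ := by
          field_simp
          linear_combination c * sq_sqrt hΛ.le
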